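/- arXiv:1910.06594 — 2 statements merged into one kernel-verified Lean document; each statement's English description precedes it below -/
import Mathlib

section
/- Let s > 0, D > 0, I_e > 0, M ≥ 0 and N be real numbers. Then the function h defined on (0, ∞) by h(T) = −(1/(2T))·(s·D·I_e·(T² − N²) + (2·s·D·T + s·D·(T² − N²)·I_e)·I_e·(M − T)) is strictly convex on (0, ∞). -/
/-!
Multiplying out, for `T > 0` the function is `a T² + b T + c + k / T` with `a = s D Iₑ² / 2 > 0`
and `k = s D Iₑ N² (1 + Iₑ M) / 2 ≥ 0`: a strictly convex quadratic plus an affine function plus a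
nonnegative multiple of the convex function `1 / T`.
-/

open Set

theorem StrictConvexOn.const_mul {𝕜 E : Type*} [Field 𝕜] [LinearOrder 𝕜] [IsStrictOrderedRing 𝕜]
    [AddCommMonoid E] [Module 𝕜 E] {s : Set E} {f : E → 𝕜} {c : 𝕜} (hc : 0 < c)
    (hf : StrictConvexOn 𝕜 s f) : StrictConvexOn 𝕜 s fun x => c * f x := by
  refine ⟨hf.1, fun x hx y hy hxy a b ha hb hab => ?_⟩
  have hlt := mul_lt_mul_of_pos_left (hf.2 hx hy hxy ha hb hab) hc
  simp only [smul_eq_mul] at hlt ⊢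
  linarith

theorem strictConvexOn_quadratic_add_inv {a k : ℝ} (b c : ℝ) (ha : 0 < a) (hk : 0 ≤ k) :
    StrictConvexOn ℝ (Ioi 0) fun x => a * x ^ 2 + b * x + c + k * x⁻¹ := by
  have hsq : StrictConvexOn ℝ (Ioi 0) fun x : ℝ => a * x ^ 2 :=
    ((Even.strictConvexOn_pow even_two two_ne_zero).subset (subset_univ _)
      (convex_Ioi 0)).const_mul ha
  have hlin : ConvexOn ℝ (Ioi 0) fun x : ℝ => b * x :=
    (LinearMap.mulLeft ℝ b).convexOn (convex_Ioi 0)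
  have hinv : ConvexOn ℝ (Ioi 0) fun x : ℝ => k * x⁻¹ := by
    simpa only [zpow_neg_one, smul_eq_mul] using (convexOn_zpow (-1)).smul hk
  exact ((hsq.add_convexOn hlin).add_convexOn (convexOn_const c (convex_Ioi 0))).add_convexOn hinv

theorem neg_interest_strictConvex (s D Ie M N : ℝ)
    (hs : 0 < s) (hD : 0 < D) (hIe : 0 < Ie) (hM : 0 ≤ M)
    (h : ℝ → ℝ)
    (hh : ∀ T : ℝ, h T = -(1 / (2 * T)) * (s * D * Ie * (T ^ 2 - N ^ 2)
        + (2 * s * D * T + s * D * (T ^ 2 - N ^ 2) * Ie) * Ie * (M - T))) :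
    StrictConvexOn ℝ (Set.Ioi (0 : ℝ)) h := by
  have hconv := strictConvexOn_quadratic_add_inv (s * D * Ie * (1 - Ie * M) / 2)
    (-(s * D * Ie * (2 * M + Ie * N ^ 2) / 2))
    (by positivity : 0 < s * D * Ie ^ 2 / 2)
    (by positivity : 0 ≤ s * D * Ie * N ^ 2 * (1 + Ie * M) / 2)
  refine hconv.congr fun T (hT : 0 < T) => ?_
  rw [hh]
  field_simp
  ring
end

section
/- Let A > 0, D > 0, θ > 0, c ≥ 0, k > 0, h, s > 0, I_e > 0, M ≥ 0, N be real numbers with k ≥ h and k + cθ > 0, let T_a ≥ 0, and let W = (D/θ)·(exp(θ·T_a) − 1). Define TC₃ on (0, ∞) by TC₃(T) = A/T + (D(k + cθ)/(θ²T))·(exp(θT) − θT − 1) − ((k − h)/(θ²T))·(D·(exp(θ·T_a) − θ·T_a − 1) + θ²·W·(T − T_a)) − (1/(2T))·(s·D·I_e·(T² − N²) + (2·s·D·T + s·D·(T² − N²)·I_e)·I_e·(M − T)). Then TC₃ is strictly convex on (0, ∞). -/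
/-! On `T > 0` the cost is `C₁ / T + α (e^{θT} - θT - 1) / T` plus a quadratic in `T` with leading
coefficient `s D Iₑ² / 2 > 0`, where `α = D (k + cθ) / θ² ≥ 0` and
`C₁ = A + (k - h) D / θ² · (1 - (1 - θTₐ) e^{θTₐ}) + s D Iₑ N² (1 + Iₑ M) / 2 ≥ 0`
since `(1 - x) eˣ ≤ 1`. The quadratic is strictly convex and the other two terms are convex: with
`u = θT`, the second derivative of `(e^u - u - 1) / T` is `(e^u (u² - 2u + 2) - 2) / T³`, and
`e^u (u² - 2u + 2) ≥ (1 + u + u²/2)(u² - 2u + 2) = 2 + u⁴/2`. -/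

open Set Real

lemma one_sub_mul_exp_le_one (x : ℝ) : (1 - x) * exp x ≤ 1 := by
  have h := mul_le_mul_of_nonneg_right (add_one_le_exp (-x)) (exp_pos x).le
  rwa [← exp_add, neg_add_cancel, exp_zero, neg_add_eq_sub] at h

lemma two_le_exp_mul_sq_sub_two_mul_add_two {x : ℝ} (hx : 0 ≤ x) :
    2 ≤ exp x * (x ^ 2 - 2 * x + 2) := by
  have hq : 0 ≤ x ^ 2 - 2 * x + 2 := by nlinarith [sq_nonneg (x - 1)]
  calc 2 ≤ (1 + x + x ^ 2 / 2) * (x ^ 2 - 2 * x + 2) := by nlinarith [pow_nonneg hx 4]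
    _ ≤ exp x * (x ^ 2 - 2 * x + 2) :=
      mul_le_mul_of_nonneg_right (quadratic_le_exp_of_nonneg hx) hq

lemma strictConvexOn_quadratic {a : ℝ} (ha : 0 < a) (b c : ℝ) :
    StrictConvexOn ℝ univ fun x : ℝ => a * x ^ 2 + b * x + c := by
  refine ⟨convex_univ, fun x _ y _ hxy u v hu hv huv => ?_⟩
  obtain rfl : v = 1 - u := by linarith
  have hgap : u • (a * x ^ 2 + b * x + c) + (1 - u) • (a * y ^ 2 + b * y + c)
      - (a * (u • x + (1 - u) • y) ^ 2 + b * (u • x + (1 - u) • y) + c)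
      = a * u * (1 - u) * (x - y) ^ 2 := by
    simp only [smul_eq_mul]; ring
  have : 0 < a * u * (1 - u) * (x - y) ^ 2 := by
    have := sub_ne_zero.mpr hxy
    positivity
  linarith

lemma convexOn_exp_mul_sub_mul_sub_one_div {θ : ℝ} (hθ : 0 ≤ θ) :
    ConvexOn ℝ (Ioi 0) fun x => (exp (θ * x) - θ * x - 1) / x := by
  have hlin (x : ℝ) : HasDerivAt (fun y => θ * y) θ x := by
    simpa using (hasDerivAt_id x).const_mul θ
  have hf' {x : ℝ} (hx : x ≠ 0) : HasDerivAt (fun x => (exp (θ * x) - θ * x - 1) / x)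
      (((θ * x - 1) * exp (θ * x) + 1) / x ^ 2) x :=
    (((hlin x).exp.sub (hlin x)).sub_const 1).div (hasDerivAt_id' x) hx
      |>.congr_deriv (by simp only [Pi.sub_apply]; field_simp; ring)
  have hf'' {x : ℝ} (hx : x ≠ 0) : HasDerivAt (fun x => ((θ * x - 1) * exp (θ * x) + 1) / x ^ 2)
      ((exp (θ * x) * ((θ * x) ^ 2 - 2 * (θ * x) + 2) - 2) / x ^ 3) x :=
    ((((hlin x).sub_const 1).mul (hlin x).exp).add_const 1).div (hasDerivAt_pow 2 x)
      (pow_ne_zero 2 hx) |>.congr_deriv (by simp only [Pi.mul_apply]; field_simp; ring)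
  refine convexOn_of_hasDerivWithinAt2_nonneg (convex_Ioi 0)
    (f' := fun x => ((θ * x - 1) * exp (θ * x) + 1) / x ^ 2)
    (f'' := fun x => (exp (θ * x) * ((θ * x) ^ 2 - 2 * (θ * x) + 2) - 2) / x ^ 3)
    (fun x hx => (hf' (ne_of_gt hx)).continuousAt.continuousWithinAt) ?_ ?_ ?_ <;>
    rw [interior_Ioi] <;> intro x (hx : 0 < x)
  · exact (hf' hx.ne').hasDerivWithinAt
  · exact (hf'' hx.ne').hasDerivWithinAt
  · have := two_le_exp_mul_sq_sub_two_mul_add_two (mul_nonneg hθ hx.le)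
    exact div_nonneg (by linarith) (by positivity)

theorem TC3_strictConvex_general (A D θ c k h s Ie M N Ta W : ℝ)
    (hA : 0 < A) (hD : 0 < D) (hθ : 0 < θ)
    (hs : 0 < s) (hIe : 0 < Ie) (hM : 0 ≤ M)
    (hkh : h ≤ k) (hkcθ : 0 < k + c * θ)
    (hW : W = (D / θ) * (Real.exp (θ * Ta) - 1))
    (TC3 : ℝ → ℝ)
    (hTC3 : ∀ T : ℝ, TC3 T = A / T
        + (D * (k + c * θ) / (θ ^ 2 * T)) * (Real.exp (θ * T) - θ * T - 1)
        - ((k - h) / (θ ^ 2 * T))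
          * (D * (Real.exp (θ * Ta) - θ * Ta - 1) + θ ^ 2 * W * (T - Ta))
        - (1 / (2 * T)) * (s * D * Ie * (T ^ 2 - N ^ 2)
            + (2 * s * D * T + s * D * (T ^ 2 - N ^ 2) * Ie) * Ie * (M - T))) :
    StrictConvexOn ℝ (Set.Ioi (0 : ℝ)) TC3 := by
  set C₁ := A + (k - h) * D / θ ^ 2 * (1 - (1 - θ * Ta) * exp (θ * Ta))
    + s * D * Ie * N ^ 2 * (1 + Ie * M) / 2
  set α := D * (k + c * θ) / θ ^ 2
  have hC₁ : 0 ≤ C₁ := by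
    have : 0 ≤ 1 - (1 - θ * Ta) * exp (θ * Ta) := sub_nonneg.mpr (one_sub_mul_exp_le_one _)
    have : 0 ≤ k - h := sub_nonneg.mpr hkh
    have : 0 ≤ 1 + Ie * M := by positivity
    positivity
  have hα : 0 ≤ α := div_nonneg (mul_nonneg hD.le hkcθ.le) (sq_nonneg θ)
  have hinv := (convexOn_zpow (-1)).smul hC₁
  have hexp := (convexOn_exp_mul_sub_mul_sub_one_div hθ.le).smul hα
  have hquad := (strictConvexOn_quadratic (by positivity : 0 < s * D * Ie ^ 2 / 2)
    (s * D * Ie * (1 - Ie * M) / 2) (-(k - h) * W - s * D * Ie * M - s * D * Ie ^ 2 * N ^ 2 / 2))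
  refine ((hinv.add hexp).add_strictConvexOn
    (hquad.subset (subset_univ _) (convex_Ioi 0))).congr fun T (hT : 0 < T) => ?_
  simp only [C₁, α, Pi.add_apply, smul_eq_mul, zpow_neg_one, hTC3, hW]
  field_simp
  ring

theorem TC3_strictConvex (A D θ c k h s Ie M N Ta W : ℝ)
    (hA : 0 < A) (hD : 0 < D) (hθ : 0 < θ) (hc : 0 ≤ c) (hk : 0 < k)
    (hs : 0 < s) (hIe : 0 < Ie) (hM : 0 ≤ M)
    (hkh : h ≤ k) (hkcθ : 0 < k + c * θ) (hTa : 0 ≤ Ta)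
    (hW : W = (D / θ) * (Real.exp (θ * Ta) - 1))
    (TC3 : ℝ → ℝ)
    (hTC3 : ∀ T : ℝ, TC3 T = A / T
        + (D * (k + c * θ) / (θ ^ 2 * T)) * (Real.exp (θ * T) - θ * T - 1)
        - ((k - h) / (θ ^ 2 * T))
          * (D * (Real.exp (θ * Ta) - θ * Ta - 1) + θ ^ 2 * W * (T - Ta))
        - (1 / (2 * T)) * (s * D * Ie * (T ^ 2 - N ^ 2)
            + (2 * s * D * T + s * D * (T ^ 2 - N ^ 2) * Ie) * Ie * (M - T))) :
    StrictConvexOn ℝ (Set.Ioi (0 : ℝ)) TC3 :=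
  TC3_strictConvex_general A D θ c k h s Ie M N Ta W hA hD hθ hs hIe hM hkh hkcθ hW TC3 hTC3
end
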